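/- Let N ≥ 8 and (p,q) on the critical hyperbola with 1 < p < (N-1)/(N-2), and define A = N(p+1)q/(q+1) - (N+2)/2 - 1 - θ + (N-2)(p-1) for θ > 0 small. Then Ap > Npq/(q+1) for all sufficiently small θ. -/

import Mathlib

/-! On the critical hyperbola `q/(q+1) = 2/N + 1/(p+1)`, so both sides become rational in `p`
alone: at `θ = 0` the inequality reduces to `N p/(p+1) < N (p - 1/2) p`, i.e. to
`N p (p - 1)(p + 3/2) > 0`. Since `A θ * p` decreases continuously in `θ`, the strict inequality
at `θ = 0` survives for small `θ`. -/

lemma div_add_one_eq_of_critical {n p q : ℝ} (hn : n ≠ 0) (hq : q + 1 ≠ 0)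
    (hcrit : 1 / (p + 1) + 1 / (q + 1) = (n - 2) / n) :
    q / (q + 1) = 2 / n + 1 / (p + 1) := by
  have hq' : q / (q + 1) = 1 - 1 / (q + 1) := by field_simp; ring
  rw [hq', eq_sub_of_add_eq' hcrit]
  field_simp
  ring

lemma mul_div_add_one_lt_mul_sub_half {n p : ℝ} (hn : 0 < n) (hp : 1 < p) :
    n * p / (p + 1) < (n * p - n / 2) * p := by
  rw [div_lt_iff₀ (by linarith)]
  have : 0 < n * p * (p - 1) * (p + 3 / 2) := by
    have := mul_pos hn (by linarith : 0 < p)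
    have := mul_pos this (by linarith : 0 < p - 1)
    exact mul_pos this (by linarith)
  linarith

lemma critical_mul_lt {n p q : ℝ} (hn : 0 < n) (hp : 1 < p)
    (hpq : q / (q + 1) = 2 / n + 1 / (p + 1)) :
    n * p * q / (q + 1)
      < (n * (p + 1) * q / (q + 1) - (n + 2) / 2 - 1 + (n - 2) * (p - 1)) * p := by
  have hp1 : p + 1 ≠ 0 := by linarith
  have hlhs : n * p * q / (q + 1) = 2 * p + n * p / (p + 1) := by
    rw [mul_div_assoc, hpq]; field_simp
  have hrhs : n * (p + 1) * q / (q + 1) = 2 * (p + 1) + n := by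
    rw [mul_div_assoc, hpq]; field_simp
  rw [hlhs, hrhs]
  linarith [mul_div_add_one_lt_mul_sub_half hn hp]

lemma exists_pos_forall_lt_sub_mul {a b p : ℝ} (hp : 0 < p) (h : b < a * p) :
    ∃ θ₀ > 0, ∀ θ < θ₀, b < (a - θ) * p :=
  ⟨(a * p - b) / p, div_pos (by linarith) hp, fun θ hθ => by
    rw [lt_div_iff₀ hp] at hθ
    linarith⟩

theorem stmt16_general (N : ℕ) (hN : 8 ≤ N) (p q : ℝ) (hq0 : 0 < q)
    (hp1 : 1 < p)
    (hcrit : 1 / (p + 1) + 1 / (q + 1) = ((N : ℝ) - 2) / N)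
    (A : ℝ → ℝ)
    (hA : ∀ θ, A θ = (N : ℝ) * (p + 1) * q / (q + 1) - ((N : ℝ) + 2) / 2 - 1 - θ
      + ((N : ℝ) - 2) * (p - 1)) :
    ∃ θ₀ > (0 : ℝ), ∀ θ : ℝ, 0 < θ → θ < θ₀ →
      (N : ℝ) * p * q / (q + 1) < A θ * p := by
  have hN0 : (0 : ℝ) < N := by
    have : (8 : ℝ) ≤ N := by exact_mod_cast hN
    linarith
  have hpq := div_add_one_eq_of_critical hN0.ne' (by linarith) hcrit
  obtain ⟨θ₀, hθ₀, hlt⟩ :=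
    exists_pos_forall_lt_sub_mul (by linarith) (critical_mul_lt hN0 hp1 hpq)
  refine ⟨θ₀, hθ₀, fun θ _ hθ => ?_⟩
  rw [hA θ]
  convert hlt θ hθ using 2
  ring

/-- For N ≥ 8 and (p,q) on the critical hyperbola with 1 < p < (N-1)/(N-2),
letting A(θ) = N(p+1)q/(q+1) - (N+2)/2 - 1 - θ + (N-2)(p-1), one has
A(θ)·p > Npq/(q+1) for all sufficiently small θ > 0. -/
theorem stmt16 (N : ℕ) (hN : 8 ≤ N) (p q : ℝ) (hq0 : 0 < q)
    (hp1 : 1 < p) (hp2 : p < ((N : ℝ) - 1) / ((N : ℝ) - 2))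
    (hcrit : 1 / (p + 1) + 1 / (q + 1) = ((N : ℝ) - 2) / N)
    (A : ℝ → ℝ)
    (hA : ∀ θ, A θ = (N : ℝ) * (p + 1) * q / (q + 1) - ((N : ℝ) + 2) / 2 - 1 - θ
      + ((N : ℝ) - 2) * (p - 1)) :
    ∃ θ₀ > (0 : ℝ), ∀ θ : ℝ, 0 < θ → θ < θ₀ →
      (N : ℝ) * p * q / (q + 1) < A θ * p :=
  stmt16_general N hN p q hq0 hp1 hcrit A hA
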